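/- arXiv:2307.05494 — 2 statements merged into one kernel-verified Lean document; each statement's English description precedes it below -/
import Mathlib

section
/- Let f : α → ℝ and c, w : Fin T → α → (N → ℝ) where N is a finite nonempty index set, T ≥ 1, and let H_c, H_w : N → ℝ → ℝ be monotone increasing convex functions. Define the original objective F(x) = (1/T)*∑ t, f(x t) + μc * max_i H_c i ((1/T)*∑ t, c t (x t) i) + μw * max_i H_w i ((1/T)*∑ t, w t (x t) i) for x : Fin T → α, with μc, μw ≥ 0. Define the transformed objective G(x, zc, zw) = (1/T)*∑ t, f(x t) + (μc/T)*∑ t, max_i H_c i (zc t i) + (μw/T)*∑ t, max_i H_w i (zw t i) over triples satisfying (1/T)*∑ t, zc t i ≥ (1/T)*∑ t, c t (x t) i and (1/T)*∑ t, zw t i ≥ (1/T)*∑ t, w t (x t) i for all i. Then the infimum of F over all x equals the infimum of G over all feasible (x, zc, zw). -/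
/-!
A feasible `(x, zc, zw)` costs at least the original objective at `x`: by monotonicity and
Jensen's inequality, `H i (mean_t c t i) ≤ H i (mean_t zc t i) ≤ mean_t H i (zc t i)
≤ mean_t max_j H j (zc t j)`. Conversely, the time-constant choice `zc t = mean_t c t (x t)`
is feasible and attains the original objective at `x`. So the two value sets dominate each
other, and their infima agree.
-/

open Finset

section TimeAverage

variable {T : ℕ}

lemma mean_const (hT : T ≠ 0) (a : ℝ) : (1 / (T : ℝ)) * ∑ _t : Fin T, a = a := by
  simp [field]

lemma div_mul_sum_const (hT : T ≠ 0) (μ a : ℝ) : (μ / (T : ℝ)) * ∑ _t : Fin T, a = μ * a := by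
  simp [field]

lemma ConvexOn.map_mean_le {g : ℝ → ℝ} (hg : ConvexOn ℝ Set.univ g) (hT : T ≠ 0)
    (z : Fin T → ℝ) : g ((1 / (T : ℝ)) * ∑ t, z t) ≤ (1 / (T : ℝ)) * ∑ t, g (z t) := by
  have hw : ∑ _t : Fin T, (1 / (T : ℝ)) = 1 := by simp [field]
  simpa [mul_sum, smul_eq_mul] using
    hg.map_sum_le (t := univ) (w := fun _ => 1 / (T : ℝ)) (p := z)
      (fun _ _ => by positivity) hw (fun _ _ => trivial)

variable {N : Type*} [Fintype N] [Nonempty N]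

lemma sup'_apply_mean_le_mean_sup' (hT : T ≠ 0) {H : N → ℝ → ℝ}
    (hH : ∀ i, Monotone (H i) ∧ ConvexOn ℝ Set.univ (H i)) {a z : Fin T → N → ℝ}
    (hle : ∀ i, (1 / (T : ℝ)) * ∑ t, a t i ≤ (1 / (T : ℝ)) * ∑ t, z t i) :
    univ.sup' univ_nonempty (fun i => H i ((1 / (T : ℝ)) * ∑ t, a t i))
      ≤ (1 / (T : ℝ)) * ∑ t, univ.sup' univ_nonempty (fun i => H i (z t i)) := by
  refine sup'_le _ _ fun i _ => ?_
  calc H i ((1 / (T : ℝ)) * ∑ t, a t i)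
      ≤ H i ((1 / (T : ℝ)) * ∑ t, z t i) := (hH i).1 (hle i)
    _ ≤ (1 / (T : ℝ)) * ∑ t, H i (z t i) := (hH i).2.map_mean_le hT _
    _ ≤ (1 / (T : ℝ)) * ∑ t, univ.sup' univ_nonempty (fun j => H j (z t j)) := by
      gcongr with t
      exact le_sup' (fun j => H j (z t j)) (mem_univ i)

lemma mul_sup'_apply_mean_le (hT : T ≠ 0) {H : N → ℝ → ℝ}
    (hH : ∀ i, Monotone (H i) ∧ ConvexOn ℝ Set.univ (H i)) {μ : ℝ} (hμ : 0 ≤ μ)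
    {a z : Fin T → N → ℝ}
    (hle : ∀ i, (1 / (T : ℝ)) * ∑ t, a t i ≤ (1 / (T : ℝ)) * ∑ t, z t i) :
    μ * univ.sup' univ_nonempty (fun i => H i ((1 / (T : ℝ)) * ∑ t, a t i))
      ≤ (μ / (T : ℝ)) * ∑ t, univ.sup' univ_nonempty (fun i => H i (z t i)) := by
  calc _ ≤ μ * ((1 / (T : ℝ)) * ∑ t, univ.sup' univ_nonempty (fun i => H i (z t i))) :=
        mul_le_mul_of_nonneg_left (sup'_apply_mean_le_mean_sup' hT hH hle) hμ
    _ = _ := by ring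

end TimeAverage

theorem transformed_problem_equivalence_general {α N : Type*} [Fintype N] [Nonempty N]
    (T : ℕ) (hT : 1 ≤ T) (f : α → ℝ) (c w : Fin T → α → N → ℝ)
    (Hc Hw : N → ℝ → ℝ)
    (hHc : ∀ i, Monotone (Hc i) ∧ ConvexOn ℝ Set.univ (Hc i))
    (hHw : ∀ i, Monotone (Hw i) ∧ ConvexOn ℝ Set.univ (Hw i))
    (μc μw : ℝ) (hμc : 0 ≤ μc) (hμw : 0 ≤ μw) :
    sInf (Set.range fun x : Fin T → α =>
      (1 / (T : ℝ)) * ∑ t, f (x t)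
      + μc * Finset.univ.sup' Finset.univ_nonempty
          (fun i => Hc i ((1 / (T : ℝ)) * ∑ t, c t (x t) i))
      + μw * Finset.univ.sup' Finset.univ_nonempty
          (fun i => Hw i ((1 / (T : ℝ)) * ∑ t, w t (x t) i)))
    = sInf { v : ℝ | ∃ (x : Fin T → α) (zc zw : Fin T → N → ℝ),
        (∀ i, (1 / (T : ℝ)) * ∑ t, c t (x t) i ≤ (1 / (T : ℝ)) * ∑ t, zc t i) ∧
        (∀ i, (1 / (T : ℝ)) * ∑ t, w t (x t) i ≤ (1 / (T : ℝ)) * ∑ t, zw t i) ∧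
        v = (1 / (T : ℝ)) * ∑ t, f (x t)
          + (μc / (T : ℝ)) * ∑ t, Finset.univ.sup' Finset.univ_nonempty
              (fun i => Hc i (zc t i))
          + (μw / (T : ℝ)) * ∑ t, Finset.univ.sup' Finset.univ_nonempty
              (fun i => Hw i (zw t i)) } := by
  have hT0 : T ≠ 0 := by omega
  apply csInf_eq_csInf_of_forall_exists_le
  · rintro _ ⟨x, rfl⟩
    refine ⟨_, ⟨x, fun _ i => (1 / (T : ℝ)) * ∑ t, c t (x t) i,
      fun _ i => (1 / (T : ℝ)) * ∑ t, w t (x t) i, fun _ => (mean_const hT0 _).ge,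
      fun _ => (mean_const hT0 _).ge, rfl⟩, ?_⟩
    rw [div_mul_sum_const hT0, div_mul_sum_const hT0]
  · rintro _ ⟨x, zc, zw, hc, hw, rfl⟩
    refine ⟨_, ⟨x, rfl⟩, ?_⟩
    exact add_le_add (add_le_add le_rfl (mul_sup'_apply_mean_le hT0 hHc hμc hc))
      (mul_sup'_apply_mean_le hT0 hHw hμw hw)

theorem transformed_problem_equivalence {α N : Type*} [Nonempty α] [Fintype N] [Nonempty N]
    (T : ℕ) (hT : 1 ≤ T) (f : α → ℝ) (c w : Fin T → α → N → ℝ)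
    (Hc Hw : N → ℝ → ℝ)
    (hHc : ∀ i, Monotone (Hc i) ∧ ConvexOn ℝ Set.univ (Hc i))
    (hHw : ∀ i, Monotone (Hw i) ∧ ConvexOn ℝ Set.univ (Hw i))
    (μc μw : ℝ) (hμc : 0 ≤ μc) (hμw : 0 ≤ μw) :
    sInf (Set.range fun x : Fin T → α =>
      (1 / (T : ℝ)) * ∑ t, f (x t)
      + μc * Finset.univ.sup' Finset.univ_nonempty
          (fun i => Hc i ((1 / (T : ℝ)) * ∑ t, c t (x t) i))
      + μw * Finset.univ.sup' Finset.univ_nonempty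
          (fun i => Hw i ((1 / (T : ℝ)) * ∑ t, w t (x t) i)))
    = sInf { v : ℝ | ∃ (x : Fin T → α) (zc zw : Fin T → N → ℝ),
        (∀ i, (1 / (T : ℝ)) * ∑ t, c t (x t) i ≤ (1 / (T : ℝ)) * ∑ t, zc t i) ∧
        (∀ i, (1 / (T : ℝ)) * ∑ t, w t (x t) i ≤ (1 / (T : ℝ)) * ∑ t, zw t i) ∧
        v = (1 / (T : ℝ)) * ∑ t, f (x t)
          + (μc / (T : ℝ)) * ∑ t, Finset.univ.sup' Finset.univ_nonempty
              (fun i => Hc i (zc t i))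
          + (μw / (T : ℝ)) * ∑ t, Finset.univ.sup' Finset.univ_nonempty
              (fun i => Hw i (zw t i)) } :=
  transformed_problem_equivalence_general T hT f c w Hc Hw hHc hHw μc μw hμc hμw
end

section
/- Let κ : ℕ → (Fin n → ℝ) evolve via κ (t+1) = componentwise-positive-part of (κ t - η • d t) with η > 0 and ‖d t‖∞ ≤ z̄ for all t. Then for any vector v with ‖v‖∞ ≤ z̄ and any t ≥ 1, |⟨κ t - κ 1, v⟩| ≤ (t-1) * n * η * z̄². -/
/-!
Every coordinate of `κ` is nonnegative from time `1` on, and the positive part is `1`-Lipschitz,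
so one projected step moves each coordinate by at most `|η * d t j| ≤ η * zbar`. After `t - 1`
steps each coordinate of `κ t - κ 1` is at most `(t - 1) * η * zbar` in absolute value, and
pairing with `v` coordinatewise gives the bound.
-/

open Finset

lemma abs_max_sub_zero_sub_le {a : ℝ} (ha : 0 ≤ a) (b : ℝ) : |max (a - b) 0 - a| ≤ |b| :=
  calc |max (a - b) 0 - a| = |max (a - b) 0 - max a 0| := by rw [max_eq_left ha]
    _ ≤ |a - b - a| := abs_max_sub_max_le_abs _ _ _
    _ = |b| := by rw [sub_sub_cancel_left, abs_neg]

lemma dist_le_mul_of_dist_succ_le {α : Type*} [PseudoMetricSpace α] {f : ℕ → α} {c : ℝ}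
    (hf : ∀ i, dist (f i) (f (i + 1)) ≤ c) (n : ℕ) : dist (f 0) (f n) ≤ n * c := by
  simpa using dist_le_range_sum_of_dist_le n (d := fun _ => c) fun {i} _ => hf i

lemma abs_sum_mul_le_card_mul {ι : Type*} [Fintype ι] {u v : ι → ℝ} {a b : ℝ}
    (hu : ∀ j, |u j| ≤ a) (hv : ∀ j, |v j| ≤ b) :
    |∑ j, u j * v j| ≤ Fintype.card ι * (a * b) :=
  calc |∑ j, u j * v j| ≤ ∑ j, |u j| * |v j| := by
        simpa only [abs_mul] using abs_sum_le_sum_abs (fun j => u j * v j) univ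
    _ ≤ ∑ _j : ι, a * b := sum_le_sum fun j _ =>
        mul_le_mul (hu j) (hv j) (abs_nonneg _) ((abs_nonneg _).trans (hu j))
    _ = Fintype.card ι * (a * b) := by rw [sum_const, card_univ, nsmul_eq_mul]

theorem dual_inner_product_drift (n : ℕ) (η zbar : ℝ) (hη : 0 < η)
    (κ : ℕ → Fin n → ℝ) (d : ℕ → Fin n → ℝ)
    (hupd : ∀ (t : ℕ) (j : Fin n), κ (t + 1) j = max (κ t j - η * d t j) 0)
    (hd : ∀ t j, |d t j| ≤ zbar)
    (v : Fin n → ℝ) (hv : ∀ j, |v j| ≤ zbar) :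
    ∀ t : ℕ, 1 ≤ t →
      |∑ j, (κ t j - κ 1 j) * v j| ≤ ((t : ℝ) - 1) * n * η * zbar ^ 2 := by
  intro t ht
  obtain ⟨k, rfl⟩ := Nat.exists_eq_add_of_le' ht
  have hstep : ∀ i j, |κ (i + 1 + 1) j - κ (i + 1) j| ≤ η * zbar := fun i j =>
    calc |κ (i + 1 + 1) j - κ (i + 1) j| ≤ |η * d (i + 1) j| := by
          rw [hupd (i + 1)]
          exact abs_max_sub_zero_sub_le (hupd i j ▸ le_max_right _ _) _
      _ ≤ η * zbar := by
          rw [abs_mul, abs_of_pos hη]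
          exact mul_le_mul_of_nonneg_left (hd _ j) hη.le
  have hdrift : ∀ j, |κ (k + 1) j - κ 1 j| ≤ k * (η * zbar) := fun j => by
    rw [abs_sub_comm]
    exact dist_le_mul_of_dist_succ_le (f := fun i => κ (i + 1) j)
      (fun i => by rw [Real.dist_eq, abs_sub_comm]; exact hstep i j) k
  calc |∑ j, (κ (k + 1) j - κ 1 j) * v j| ≤ Fintype.card (Fin n) * (k * (η * zbar) * zbar) :=
        abs_sum_mul_le_card_mul hdrift hv
    _ = ((k + 1 : ℕ) - 1 : ℝ) * n * η * zbar ^ 2 := by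
        rw [Fintype.card_fin]; push_cast; ring
end
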